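/- arXiv:0905.4253 — 4 statements merged into one kernel-verified Lean document; each statement's English description precedes it below -/
import Mathlib

section
/- Define η_a(u) = q_{a+1}(u) + (1/2)(-1)^{r-1} q_a(u) + (1/2)δ_{a,0} for a ≥ 0 (working over a ring in which 2 is invertible). Then for every 0 ≤ j ≤ r-1: ∑_{μ=0}^{r-j-1} η_μ(u) a_{μ+j+1}(u) = -2·δ_{(r-j odd)}·a_j(u) + δ_{(j even)}·a_{j+1}(u). -/
open Finset

/-- Generating function `∏ i, (1 + uᵢ t)/(1 - uᵢ t)` in `R[[t]]`, where the factor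
`1/(1 - uᵢ t)` is interpreted as the power series `∑ₖ uᵢ^k t^k`. -/
noncomputable def schurQSeries {R : Type*} [CommRing R] {r : ℕ} (u : Fin r → R) :
    PowerSeries R :=
  ∏ i : Fin r,
    ((1 + PowerSeries.C (u i) * PowerSeries.X) * PowerSeries.mk (fun k => u i ^ k))

/-- The Schur q-function `q_a(u)`: the coefficient of `t^a` in the generating function. -/
noncomputable def schurQ {R : Type*} [CommRing R] {r : ℕ} (u : Fin r → R) (a : ℕ) : R :=
  PowerSeries.coeff a (schurQSeries u)

/-- The signed elementary symmetric function `a_j(u) = (-1)^{r-j} ε_{r-j}(u)`, i.e. the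
coefficient of `t^j` in `∏ i, (t - uᵢ)`. -/
noncomputable def signedESymm {R : Type*} [CommRing R] {r : ℕ} (u : Fin r → R) (j : ℕ) : R :=
  (∏ i : Fin r, (Polynomial.X - Polynomial.C (u i))).coeff j

/-- `η_a(u) = q_{a+1}(u) + (1/2)(-1)^{r-1} q_a(u) + (1/2)δ_{a,0}`. -/
noncomputable def etaSeq {R : Type*} [CommRing R] [Invertible (2 : R)] {r : ℕ}
    (u : Fin r → R) (a : ℕ) : R :=
  schurQ u (a + 1) + ⅟(2 : R) * (-1) ^ (r - 1) * schurQ u a +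
    ⅟(2 : R) * (if a = 0 then 1 else 0)

/-! With `B(t) = ∏ i, (1 - uᵢ t)`, whose coefficients are `a_r, …, a_0`, the generating function
of the `q_a` satisfies `Q(t) B(t) = B(-t)`. Comparing coefficients of `t ^ (r - j)` gives
`∑ₖ q_k a_{j+k} = (-1)^(r-j) a_j`; the three summands of `η` reduce to this identity at `j` and
at `j + 1`, and the resulting signs `(-1)^(r-j) - 1` and `((-1)^j + 1) / 2` are the parity
indicators. -/

namespace PowerSeries

variable {R : Type*} [CommRing R]

theorem mk_pow_mul_one_sub_C_mul_X (a : R) : mk (a ^ ·) * (1 - C a * X) = 1 := by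
  simpa [rescale_mk, rescale_X] using congrArg (rescale a) (mk_one_mul_one_sub_eq_one R)

theorem rescale_neg_one_one_sub_C_mul_X (a : R) :
    rescale (-1) (1 - C a * X) = 1 + C a * X := by
  ext (_ | _ | n) <;> simp [coeff_rescale, coeff_one]

end PowerSeries

namespace Polynomial

variable {R ι : Type*} [CommRing R]

theorem reflect_one_X_sub_C (a : R) : reflect 1 (X - C a) = 1 - C a * X := by
  rw [reflect_sub, reflect_C, ← pow_one X, reflect_monomial, revAt_le le_rfl]
  simp

theorem reflect_prod_X_sub_C (s : Finset ι) (f : ι → R) :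
    reflect #s (∏ i ∈ s, (X - C (f i))) = ∏ i ∈ s, (1 - C (f i) * X) := by
  induction s using Finset.cons_induction with
  | empty => simp
  | cons a s ha ih =>
    have hdeg : (∏ i ∈ s, (X - C (f i))).natDegree ≤ #s := by
      refine (natDegree_prod_le _ _).trans ?_
      simpa using sum_le_card_nsmul s _ 1 fun i _ => natDegree_X_sub_C_le (f i)
    rw [prod_cons, prod_cons, card_cons, add_comm,
      reflect_mul _ _ (natDegree_X_sub_C_le _) hdeg, ih, reflect_one_X_sub_C]

theorem coeff_prod_one_sub_C_mul_X (s : Finset ι) (f : ι → R) {k : ℕ} (hk : k ≤ #s) :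
    PowerSeries.coeff k (∏ i ∈ s, (1 - PowerSeries.C (f i) * PowerSeries.X)) =
      (∏ i ∈ s, (X - C (f i))).coeff (#s - k) := by
  have hcoe : ∏ i ∈ s, (1 - PowerSeries.C (f i) * PowerSeries.X) =
      ((∏ i ∈ s, (1 - C (f i) * X) : R[X]) : PowerSeries R) := by
    rw [← coeToPowerSeries.ringHom_apply, map_prod]
    simp
  rw [hcoe, coeff_coe, ← reflect_prod_X_sub_C, coeff_reflect, revAt_le hk]

end Polynomial

section SchurQ

open PowerSeries

variable {R : Type*} [CommRing R] {r : ℕ} (u : Fin r → R)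

theorem schurQSeries_mul_prod_one_sub_C_mul_X :
    schurQSeries u * ∏ i, (1 - C (u i) * X) = ∏ i, (1 + C (u i) * X) := by
  rw [schurQSeries, ← prod_mul_distrib]
  refine prod_congr rfl fun i _ => ?_
  rw [mul_assoc, mk_pow_mul_one_sub_C_mul_X, mul_one]

theorem schurQ_zero : schurQ u 0 = 1 := by
  simp [schurQ, schurQSeries, coeff_zero_eq_constantCoeff, map_prod]

theorem sum_schurQ_mul_signedESymm {j : ℕ} (hj : j ≤ r) :
    ∑ k ∈ range (r - j + 1), schurQ u k * signedESymm u (k + j) =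
      (-1) ^ (r - j) * signedESymm u j := by
  have hB : ∀ k ≤ r, coeff k (∏ i, (1 - C (u i) * X)) = signedESymm u (r - k) := fun k hk => by
    simpa [signedESymm] using Polynomial.coeff_prod_one_sub_C_mul_X univ u (k := k)
      (by simpa using hk)
  have hneg : ∏ i, (1 + C (u i) * X) = rescale (-1) (∏ i, (1 - C (u i) * X)) := by
    simp only [map_prod, rescale_neg_one_one_sub_C_mul_X]
  have h := congrArg (coeff (r - j)) (schurQSeries_mul_prod_one_sub_C_mul_X u)
  rw [hneg, coeff_rescale, hB _ (Nat.sub_le r j), Nat.sub_sub_self hj, coeff_mul,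
    Nat.sum_antidiagonal_eq_sum_range_succ_mk] at h
  rw [← h]
  refine sum_congr rfl fun k hk => ?_
  rw [hB _ (by omega), show r - (r - j - k) = k + j by grind]
  rfl

theorem sum_schurQ_mul_signedESymm_succ {j : ℕ} (hj : j < r) :
    ∑ μ ∈ range (r - j), schurQ u μ * signedESymm u (μ + j + 1) =
      (-1) ^ (r - j - 1) * signedESymm u (j + 1) := by
  simpa [show r - (j + 1) + 1 = r - j by omega, Nat.sub_sub, add_assoc] using
    sum_schurQ_mul_signedESymm u hj

theorem sum_schurQ_succ_mul_signedESymm {j : ℕ} (hj : j ≤ r) :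
    ∑ μ ∈ range (r - j), schurQ u (μ + 1) * signedESymm u (μ + j + 1) =
      ((-1) ^ (r - j) - 1) * signedESymm u j := by
  have h := sum_schurQ_mul_signedESymm u hj
  rw [sum_range_succ', schurQ_zero, zero_add, one_mul] at h
  simp only [add_right_comm _ 1 j] at h
  rw [sub_one_mul, ← h, add_sub_cancel_right]

end SchurQ

theorem neg_one_pow_sub_one_eq_ite {R : Type*} [Ring R] (n : ℕ) :
    (-1 : R) ^ n - 1 = -2 * if Odd n then 1 else 0 := by
  rcases n.even_or_odd with hn | hn
  · simp [hn.neg_one_pow, Nat.not_odd_iff_even.mpr hn]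
  · rw [hn.neg_one_pow, if_pos hn]
    norm_num

theorem invOf_two_mul_neg_one_pow_add_one {R : Type*} [Ring R] [Invertible (2 : R)] (n : ℕ) :
    ⅟2 * ((-1 : R) ^ n + 1) = if Even n then 1 else 0 := by
  rcases n.even_or_odd with hn | hn
  · rw [hn.neg_one_pow, if_pos hn, one_add_one_eq_two, invOf_mul_self]
  · simp [hn.neg_one_pow, Nat.not_even_iff_odd.mpr hn]

theorem eta_signedESymm_identity_general {R : Type*} [CommRing R] [Invertible (2 : R)] {r : ℕ}
    (u : Fin r → R) :
    ∀ j < r, ∑ μ ∈ Finset.range (r - j), etaSeq u μ * signedESymm u (μ + j + 1) =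
      -2 * (if Odd (r - j) then (1 : R) else 0) * signedESymm u j +
        (if Even j then (1 : R) else 0) * signedESymm u (j + 1) := by
  intro j hj
  have hsign : (-1 : R) ^ (r - 1) * (-1) ^ (r - j - 1) = (-1) ^ j := by
    rw [← pow_add, show r - 1 + (r - j - 1) = j + 2 * (r - 1 - j) by omega, pow_add, pow_mul,
      neg_one_sq, one_pow, mul_one]
  have hdelta : ∑ μ ∈ range (r - j), (if μ = 0 then (1 : R) else 0) * signedESymm u (μ + j + 1) =
      signedESymm u (j + 1) := by
    rw [sum_eq_single_of_mem 0 (mem_range.2 (by omega)) (fun μ _ hμ => by simp [hμ])]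
    simp [add_comm]
  simp only [etaSeq, add_mul, sum_add_distrib, mul_assoc, ← mul_sum]
  rw [sum_schurQ_succ_mul_signedESymm u hj.le, sum_schurQ_mul_signedESymm_succ u hj, hdelta]
  linear_combination ⅟2 * signedESymm u (j + 1) * hsign +
    signedESymm u j * neg_one_pow_sub_one_eq_ite (R := R) (r - j) +
    signedESymm u (j + 1) * invOf_two_mul_neg_one_pow_add_one (R := R) j

/-- for 0 ≤ j ≤ r-1,
∑_{μ=0}^{r-j-1} η_μ(u) a_{μ+j+1}(u) = -2·δ_{(r-j odd)}·a_j(u) + δ_{(j even)}·a_{j+1}(u). -/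
theorem eta_signedESymm_identity {R : Type*} [CommRing R] [Invertible (2 : R)] {r : ℕ}
    (hr : 0 < r) (u : Fin r → R) :
    ∀ j < r, ∑ μ ∈ Finset.range (r - j), etaSeq u μ * signedESymm u (μ + j + 1) =
      -2 * (if Odd (r - j) then (1 : R) else 0) * signedESymm u j +
        (if Even j then (1 : R) else 0) * signedESymm u (j + 1) :=
  eta_signedESymm_identity_general u
end

section
/- Let F be a field of characteristic ≠ 2 and u_1,...,u_r ∈ F pairwise distinct with u_i + u_j ≠ 0 for all i,j. Define γ_i = (2u_i - (-1)^r)·∏_{j≠i} (u_i+u_j)/(u_i-u_j). Then (γ_1,...,γ_r) is the unique solution of the linear system ∑_{k=1}^r γ_k/(u_j+u_k) = 1 + 1/(2u_j), for j = 1,...,r. -/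
/-!
Put `D x = ∏ l, (x - u l)`, `N x = ∏ l, (x + u l)` and `α k = ∏ l ≠ k, (u k + u l) / (u k - u l)`.
Both polynomials are monic of degree `r`, so `N - D` has degree `< r`, and Lagrange interpolation
at the nodes `u k` is the partial fraction expansion
`N x / D x - 1 = ∑ k, 2 u k α k / (x - u k)`.
At `x = -u j`, where `N` vanishes, this gives `∑ k, 2 u k α k / (u j + u k) = 1`; at `x = 0`,
where `N / D = (-1) ^ r`, it gives `2 ∑ k, α k = 1 - (-1) ^ r`. These two identities combine to
the system. Uniqueness holds because a Cauchy matrix `1 / (x i - y j)` is nonsingular: a kernel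
vector `c` gives the interpolant with values `c j / w j` at the nodes `y j` (`w` the nodal weights),
which has degree `< r` and vanishes at the `r` points `x i`.
-/

open Finset Polynomial Lagrange Function

section

variable {F ι : Type*} [Field F] [Fintype ι] [DecidableEq ι]

theorem Lagrange.eval_div_eval_nodal {v : ι → F} (hv : Injective v) {p : F[X]}
    (hp : p.degree < Fintype.card ι) {x : F} (hx : ∀ i, x ≠ v i) :
    p.eval x / (nodal univ v).eval x =
      ∑ i, nodalWeight univ v i * p.eval (v i) / (x - v i) := by
  have h := eval_interpolate_not_at_node (fun i => p.eval (v i)) fun i (_ : i ∈ univ) => hx i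
  rw [← eq_interpolate hv.injOn (by simpa using hp)] at h
  rw [h, mul_div_cancel_left₀ _ (eval_nodal_not_at_node fun i _ => hx i)]
  simp only [div_eq_mul_inv, mul_right_comm]

theorem injective_sum_div_sub {x y : ι → F} (hx : Injective x) (hy : Injective y)
    (hxy : ∀ i j, x i ≠ y j) : Injective fun (c : ι → F) i => ∑ j, c j / (x i - y j) := by
  intro c d hcd
  set r : ι → F := fun j => (c j - d j) / nodalWeight univ y j
  have hr : interpolate univ y r = 0 := by
    refine eq_zero_of_degree_lt_of_eval_index_eq_zero univ hx.injOn
      (degree_interpolate_lt _ hy.injOn) fun i _ => ?_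
    have hi : ∑ j, (c j - d j) / (x i - y j) = 0 := by
      simp only [sub_div, sum_sub_distrib]
      exact sub_eq_zero.mpr (congrFun hcd i)
    have hw : ∀ j, nodalWeight univ y j * (x i - y j)⁻¹ * r j = (c j - d j) / (x i - y j) :=
      fun j => by simp only [r]; field_simp [nodalWeight_ne_zero hy.injOn (mem_univ j)]
    rw [eval_interpolate_not_at_node _ fun j _ => hxy i j, sum_congr rfl fun j _ => hw j, hi,
      mul_zero]
  funext j
  have hj := eval_interpolate_at_node r hy.injOn (mem_univ j)
  rw [hr, eval_zero, eq_comm, div_eq_zero_iff, sub_eq_zero] at hj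
  exact hj.resolve_right (nodalWeight_ne_zero hy.injOn (mem_univ j))

variable {u : ι → F}

theorem sum_nodalWeight_mul_prod_add_div_sub (hu : Injective u) {x : F} (hx : ∀ k, x ≠ u k) :
    ∑ k, nodalWeight univ u k * (∏ l, (u k + u l)) / (x - u k) =
      (∏ l, (x + u l)) / (∏ l, (x - u l)) - 1 := by
  have hdeg : (nodal univ (-u) - nodal univ u).degree < Fintype.card ι := by
    have h := degree_sub_lt_left (p := nodal univ (-u)) (q := nodal univ u)
      (by rw [degree_nodal, degree_nodal]) nodal_ne_zero
      (nodal_monic.leadingCoeff.trans nodal_monic.leadingCoeff.symm)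
    rwa [degree_nodal, card_univ] at h
  have hD : ∏ l, (x - u l) ≠ 0 := prod_ne_zero_iff.mpr fun l _ => sub_ne_zero.mpr (hx l)
  have h := eval_div_eval_nodal hu hdeg hx
  simp only [eval_sub, eval_nodal, Pi.neg_apply, sub_neg_eq_add] at h
  rw [sub_div, div_self hD] at h
  rw [h]
  refine sum_congr rfl fun k _ => ?_
  have hk : ∏ l, (u k - u l) = 0 := prod_eq_zero (mem_univ k) (sub_self (u k))
  rw [hk, sub_zero]

theorem nodalWeight_mul_prod_add (k : ι) :
    nodalWeight univ u k * ∏ l, (u k + u l) =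
      2 * u k * ∏ l ∈ univ.erase k, (u k + u l) / (u k - u l) := by
  rw [nodalWeight, ← mul_prod_erase univ (fun l => u k + u l) (mem_univ k), prod_div_distrib,
    div_eq_mul_inv, prod_inv_distrib, two_mul]
  ring

theorem sum_mul_prod_div_add_eq_one (hu : Injective u) (hsum : ∀ i j, u i + u j ≠ 0) (j : ι) :
    ∑ k, 2 * u k * (∏ l ∈ univ.erase k, (u k + u l) / (u k - u l)) / (u j + u k) = 1 := by
  have h := sum_nodalWeight_mul_prod_add_div_sub hu (x := -u j)
    fun k hk => hsum j k (by rw [← hk, add_neg_cancel])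
  rw [prod_eq_zero (mem_univ j) (neg_add_cancel (u j)), zero_div, zero_sub] at h
  simp only [nodalWeight_mul_prod_add, ← neg_add', div_neg, sum_neg_distrib, neg_inj] at h
  exact h

theorem two_mul_sum_prod_div (hu : Injective u) (hsum : ∀ i j, u i + u j ≠ 0) :
    2 * ∑ k, ∏ l ∈ univ.erase k, (u k + u l) / (u k - u l) = 1 - (-1) ^ Fintype.card ι := by
  have hu0 : ∀ k, u k ≠ 0 := fun k hk => hsum k k (by rw [hk, add_zero])
  have h := sum_nodalWeight_mul_prod_add_div_sub hu (x := 0) fun k hk => hu0 k hk.symm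
  have hP : ∏ l, u l ≠ 0 := prod_ne_zero_iff.mpr fun l _ => hu0 l
  have hterm : ∀ k, 2 * u k * (∏ l ∈ univ.erase k, (u k + u l) / (u k - u l)) / -u k =
      -(2 * ∏ l ∈ univ.erase k, (u k + u l) / (u k - u l)) := fun k => by
    field_simp [hu0 k]
  simp only [nodalWeight_mul_prod_add, zero_add, zero_sub, prod_neg, card_univ, hterm,
    sum_neg_distrib, ← mul_sum, div_mul_cancel_right₀ hP, ← inv_pow, inv_neg_one] at h
  linear_combination -h

theorem sum_mul_prod_div_add (hu : Injective u) (hsum : ∀ i j, u i + u j ≠ 0) (j : ι) :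
    ∑ k, (2 * u k - (-1) ^ Fintype.card ι) * (∏ l ∈ univ.erase k, (u k + u l) / (u k - u l)) /
      (u j + u k) = 1 + 1 / (2 * u j) := by
  set ε : F := (-1) ^ Fintype.card ι
  set α : ι → F := fun k => ∏ l ∈ univ.erase k, (u k + u l) / (u k - u l)
  have hε : ε * ε = 1 := by rw [← mul_pow, neg_one_mul, neg_neg, one_pow]
  have h2u : 2 * u j ≠ 0 := by rw [two_mul]; exact hsum j j
  have h2 : (2 : F) ≠ 0 := left_ne_zero_of_mul h2u
  have huj : u j ≠ 0 := right_ne_zero_of_mul h2u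
  -- `u j / (u j + u k) = 1 - u k / (u j + u k)` reduces the `ε` part to the two known sums
  have hterm : ∀ k, (2 * u k - ε) * α k / (u j + u k) =
      2 * u k * α k / (u j + u k) - ε / (2 * u j) * (2 * α k - 2 * u k * α k / (u j + u k)) :=
    fun k => by field_simp [hsum j k]; ring
  rw [sum_congr rfl fun k _ => hterm k, sum_sub_distrib, ← mul_sum, sum_sub_distrib, ← mul_sum,
    two_mul_sum_prod_div hu hsum, sum_mul_prod_div_add_eq_one hu hsum]
  linear_combination (1 / (2 * u j)) * hε

end

theorem gamma_unique_solution_general {F : Type*} [Field F] {r : ℕ}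
    (u : Fin r → F) (hinj : Function.Injective u) (hsum : ∀ i j, u i + u j ≠ 0) :
    (∀ j, ∑ k, ((2 * u k - (-1) ^ r) * ∏ l ∈ Finset.univ.erase k, (u k + u l) / (u k - u l)) /
        (u j + u k) = 1 + 1 / (2 * u j)) ∧
    (∀ g : Fin r → F, (∀ j, ∑ k, g k / (u j + u k) = 1 + 1 / (2 * u j)) →
      ∀ i, g i = (2 * u i - (-1) ^ r) * ∏ l ∈ Finset.univ.erase i, (u i + u l) / (u i - u l)) := by
  have hex := Fintype.card_fin r ▸ sum_mul_prod_div_add hinj hsum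
  refine ⟨hex, fun g hg => congrFun ?_⟩
  refine injective_sum_div_sub (y := -u) hinj (neg_injective.comp hinj)
    (fun i j h => hsum i j (by rw [h, Pi.neg_apply, neg_add_cancel])) (funext fun j => ?_)
  simp only [Pi.neg_apply, sub_neg_eq_add, hg, hex]

/-- γ_i = (2u_i - (-1)^r)·∏_{j≠i} (u_i+u_j)/(u_i-u_j) is the unique solution of
the system ∑_k γ_k/(u_j+u_k) = 1 + 1/(2u_j), j = 1,…,r. -/
theorem gamma_unique_solution {F : Type*} [Field F] (h2 : (2 : F) ≠ 0) {r : ℕ}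
    (u : Fin r → F) (hinj : Function.Injective u) (hsum : ∀ i j, u i + u j ≠ 0) :
    (∀ j, ∑ k, ((2 * u k - (-1) ^ r) * ∏ l ∈ Finset.univ.erase k, (u k + u l) / (u k - u l)) /
        (u j + u k) = 1 + 1 / (2 * u j)) ∧
    (∀ g : Fin r → F, (∀ j, ∑ k, g k / (u j + u k) = 1 + 1 / (2 * u j)) →
      ∀ i, g i = (2 * u i - (-1) ^ r) * ∏ l ∈ Finset.univ.erase i, (u i + u l) / (u i - u l)) :=
  gamma_unique_solution_general u hinj hsum
end

section
/- Let u_1,...,u_r be elements of a commutative ring R in which 2 is invertible, and define γ_i({\bf u}) = (2u_i - (-1)^r)·∏_{j≠i} (u_i+u_j)/(u_i-u_j) (as rational functions when u are indeterminates over ℤ[1/2]), and η_a = ∑_{i=1}^r γ_i u_i^a. Then η_a = q_{a+1}(u) - (1/2)(-1)^r q_a(u) + (1/2)δ_{a,0} for all a ≥ 0; in particular, each η_a is a symmetric polynomial in u_1,...,u_r. -/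
/-!
Partial fractions: with `pᵢ = ∏_{j ≠ i} (uᵢ + uⱼ) / (uᵢ - uⱼ)`,
`∏ᵢ (1 + uᵢ t) / (1 - uᵢ t) = (-1)^r + ∑ᵢ 2 pᵢ / (1 - uᵢ t)`.
Cleared of denominators, both sides are polynomials of degree `< r` (the leading coefficients
of `∏ᵢ (1 + uᵢ t)` and `(-1)^r ∏ᵢ (1 - uᵢ t)` cancel) that agree at the `r` points `t = uₖ⁻¹`.
Comparing coefficients gives `q_a = (-1)^r δ_{a,0} + 2 ∑ᵢ pᵢ uᵢ^a`, and then
`η_a = 2 ∑ᵢ pᵢ uᵢ^(a+1) - (-1)^r ∑ᵢ pᵢ uᵢ^a` is a combination of `q_{a+1}` and `q_a`.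
-/

open Finset

namespace Polynomial

variable {K : Type*} [Field K] {ι : Type*} {s : Finset ι} {a : ι → K}

theorem degree_prod_C_mul_X_add_C (b : ι → K) (ha : ∀ i ∈ s, a i ≠ 0) :
    (∏ i ∈ s, (C (a i) * X + C (b i))).degree = (#s : WithBot ℕ) := by
  rw [degree_prod, sum_congr rfl fun i hi => degree_linear (ha i hi)]
  simp

theorem leadingCoeff_prod_C_mul_X_add_C (b : ι → K) (ha : ∀ i ∈ s, a i ≠ 0) :
    (∏ i ∈ s, (C (a i) * X + C (b i))).leadingCoeff = ∏ i ∈ s, a i := by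
  rw [leadingCoeff_prod]
  exact prod_congr rfl fun i hi => leadingCoeff_linear (ha i hi)

theorem degree_prod_C_mul_X_add_C_sub_prod_lt (b c : ι → K) (ha : ∀ i ∈ s, a i ≠ 0) :
    (∏ i ∈ s, (C (a i) * X + C (b i)) - ∏ i ∈ s, (C (a i) * X + C (c i))).degree <
      (#s : WithBot ℕ) := by
  have hne : ∏ i ∈ s, (C (a i) * X + C (b i)) ≠ 0 := by
    intro h
    simpa [h] using degree_prod_C_mul_X_add_C b ha
  refine (degree_sub_lt_left ?_ hne ?_).trans_eq (degree_prod_C_mul_X_add_C b ha)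
  · rw [degree_prod_C_mul_X_add_C b ha, degree_prod_C_mul_X_add_C c ha]
  · rw [leadingCoeff_prod_C_mul_X_add_C b ha, leadingCoeff_prod_C_mul_X_add_C c ha]

end Polynomial

namespace PowerSeries

variable {R : Type*} [CommRing R]

theorem one_sub_C_mul_X_mul_mk_pow (a : R) :
    (1 - C a * X) * mk (fun k => a ^ k) = 1 := by
  simpa [rescale_mk, mul_comm] using congrArg (rescale a) (mk_one_mul_one_sub_eq_one R)

variable {ι : Type*} (s : Finset ι) (u : ι → R)

theorem prod_one_sub_C_mul_X_mul_prod_mk_pow :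
    (∏ i ∈ s, (1 - C (u i) * X)) * ∏ i ∈ s, mk (fun k => u i ^ k) = 1 := by
  rw [← prod_mul_distrib]
  exact prod_eq_one fun i _ => one_sub_C_mul_X_mul_mk_pow (u i)

theorem prod_erase_one_sub_C_mul_X_mul_prod_mk_pow [DecidableEq ι] {i : ι} (hi : i ∈ s) :
    (∏ j ∈ s.erase i, (1 - C (u j) * X)) * ∏ j ∈ s, mk (fun k => u j ^ k) =
      mk (fun k => u i ^ k) := by
  rw [← mul_prod_erase s _ hi, mul_left_comm, prod_one_sub_C_mul_X_mul_prod_mk_pow, mul_one]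

end PowerSeries

section

variable {K : Type*} [Field K] {r : ℕ}

noncomputable def partialFractionCoeff (u : Fin r → K) (i : Fin r) : K :=
  ∏ j ∈ univ.erase i, (u i + u j) / (u i - u j)

theorem prod_one_add_mul_inv_eq (u : Fin r → K) (h0 : ∀ i, u i ≠ 0)
    (hu : Function.Injective u) (k : Fin r) :
    ∏ i, (1 + u i * (u k)⁻¹) =
      2 * partialFractionCoeff u k * ∏ j ∈ univ.erase k, (1 - u j * (u k)⁻¹) := by
  have hfactor : ∀ j ∈ univ.erase k,
      1 + u j * (u k)⁻¹ = (u k + u j) / (u k - u j) * (1 - u j * (u k)⁻¹) := by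
    intro j hj
    have : u k - u j ≠ 0 := sub_ne_zero.mpr (hu.ne (ne_of_mem_erase hj).symm)
    field_simp [h0 k]
  rw [← mul_prod_erase univ _ (mem_univ k), mul_inv_cancel₀ (h0 k), prod_congr rfl hfactor,
    prod_mul_distrib, partialFractionCoeff]
  ring

open Polynomial in
theorem prod_one_add_C_mul_X_sub_eq_sum (u : Fin r → K) (h0 : ∀ i, u i ≠ 0)
    (hu : Function.Injective u) :
    ∏ i, (1 + C (u i) * X) - C ((-1) ^ r) * ∏ i, (1 - C (u i) * X) =
      ∑ i, C (2 * partialFractionCoeff u i) * ∏ j ∈ univ.erase i, (1 - C (u j) * X) := by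
  have hN : ∏ i, (1 + C (u i) * X) = ∏ i, (C (u i) * X + C 1) := by
    simp only [C_1, add_comm]
  have hD : C ((-1) ^ r) * ∏ i, (1 - C (u i) * X) = ∏ i, (C (u i) * X + C (-1)) := by
    rw [prod_congr rfl fun i _ => show C (u i) * X + C (-1) = -(1 - C (u i) * X) by
      rw [C_neg, C_1]; ring, prod_neg, card_univ, Fintype.card_fin, C_pow, C_neg, C_1]
  have hQ : ∀ i, ∏ j ∈ univ.erase i, (1 - C (u j) * X) =
      ∏ j ∈ univ.erase i, (C (-u j) * X + C 1) :=
    fun i => prod_congr rfl fun j _ => by rw [C_neg, C_1]; ring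
  refine eq_of_degrees_lt_of_eval_index_eq univ (v := fun k => (u k)⁻¹)
    (inv_injective.comp hu).injOn ?_ ?_ fun k _ => ?_
  · rw [hN, hD]
    exact degree_prod_C_mul_X_add_C_sub_prod_lt _ _ fun i _ => h0 i
  · refine (degree_sum_le _ _).trans_lt
      ((Finset.sup_lt_iff (WithBot.bot_lt_coe _)).mpr fun i _ => ?_)
    rw [← smul_eq_C_mul, hQ]
    refine (degree_smul_le _ _).trans_lt ?_
    rw [degree_prod_C_mul_X_add_C _ fun j _ => neg_ne_zero.mpr (h0 j),
      card_erase_of_mem (mem_univ i), card_univ, Fintype.card_fin]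
    exact_mod_cast Nat.sub_lt i.pos one_pos
  · simp only [eval_sub, eval_mul, eval_C, eval_prod, eval_finsetSum, eval_add, eval_one, eval_X]
    have hvanish : ∀ t : Finset (Fin r), k ∈ t → ∏ j ∈ t, (1 - u j * (u k)⁻¹) = 0 :=
      fun t hk => prod_eq_zero hk (by rw [mul_inv_cancel₀ (h0 k), sub_self])
    rw [hvanish univ (mem_univ k), mul_zero, sub_zero, prod_one_add_mul_inv_eq u h0 hu k,
      sum_eq_single k (fun i _ hik => by rw [hvanish _ (mem_erase.mpr ⟨hik.symm, mem_univ k⟩),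
        mul_zero]) (fun h => (h (mem_univ k)).elim)]

open PowerSeries in
theorem schurQSeries_eq_add_sum (u : Fin r → K) (h0 : ∀ i, u i ≠ 0)
    (hu : Function.Injective u) :
    schurQSeries u = C ((-1) ^ r) +
      ∑ i, C (2 * partialFractionCoeff u i) * PowerSeries.mk (fun k => u i ^ k) := by
  have hpoly := congrArg (Polynomial.coeToPowerSeries.ringHom (R := K))
    (prod_one_add_C_mul_X_sub_eq_sum u h0 hu)
  simp only [map_sub, map_mul, map_prod, map_sum, map_add, map_one,
    Polynomial.coeToPowerSeries.ringHom_apply, Polynomial.coe_C, Polynomial.coe_X] at hpoly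
  set G := ∏ i, PowerSeries.mk (fun k => u i ^ k)
  calc schurQSeries u = (∏ i, (1 + C (u i) * X)) * G := prod_mul_distrib
    _ = (∏ i, (1 + C (u i) * X) - C ((-1) ^ r) * ∏ i, (1 - C (u i) * X)) * G +
          C ((-1) ^ r) * ((∏ i, (1 - C (u i) * X)) * G) := by ring
    _ = C ((-1) ^ r) +
          ∑ i, C (2 * partialFractionCoeff u i) * PowerSeries.mk (fun k => u i ^ k) := by
      rw [hpoly, prod_one_sub_C_mul_X_mul_prod_mk_pow, sum_mul, mul_one, add_comm]
      simp only [G, mul_assoc, prod_erase_one_sub_C_mul_X_mul_prod_mk_pow _ u (mem_univ _), map_mul]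

theorem schurQ_eq_add_sum (u : Fin r → K) (h0 : ∀ i, u i ≠ 0) (hu : Function.Injective u)
    (a : ℕ) :
    schurQ u a =
      (-1) ^ r * (if a = 0 then 1 else 0) + 2 * ∑ i, partialFractionCoeff u i * u i ^ a := by
  rw [schurQ, schurQSeries_eq_add_sum u h0 hu, map_add, map_sum, mul_sum, PowerSeries.coeff_C]
  simp only [PowerSeries.coeff_C_mul, PowerSeries.coeff_mk, mul_ite, mul_one, mul_zero, mul_assoc]

theorem sum_gamma_mul_pow_eq_schurQ (u : Fin r → K) (h0 : ∀ i, u i ≠ 0)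
    (hu : Function.Injective u) (h2 : (2 : K) ≠ 0) (a : ℕ) :
    ∑ i, ((2 * u i - (-1) ^ r) * ∏ j ∈ univ.erase i, (u i + u j) / (u i - u j)) * u i ^ a =
      schurQ u (a + 1) - 1 / 2 * (-1) ^ r * schurQ u a +
        1 / 2 * (if a = 0 then 1 else 0) := by
  have hsplit : ∑ i, ((2 * u i - (-1) ^ r) * ∏ j ∈ univ.erase i, (u i + u j) / (u i - u j)) *
      u i ^ a = 2 * ∑ i, partialFractionCoeff u i * u i ^ (a + 1) -
        (-1) ^ r * ∑ i, partialFractionCoeff u i * u i ^ a := by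
    rw [mul_sum, mul_sum, ← sum_sub_distrib]
    exact sum_congr rfl fun i _ => by rw [partialFractionCoeff]; ring
  have hsq : ((-1 : K) ^ r) ^ 2 = 1 := by rw [← pow_mul, pow_mul', neg_one_sq, one_pow]
  rw [hsplit, schurQ_eq_add_sum u h0 hu, schurQ_eq_add_sum u h0 hu, if_neg a.succ_ne_zero]
  field_simp
  linear_combination (if a = 0 then (1 : K) else 0) * hsq

end

theorem eta_eq_schurQ_formula_general (r : ℕ) :
    ∀ a : ℕ,
      (∑ i : Fin r,
        ((2 * (algebraMap (MvPolynomial (Fin r) ℚ) (FractionRing (MvPolynomial (Fin r) ℚ))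
              (MvPolynomial.X i)) - (-1) ^ r) *
          ∏ j ∈ Finset.univ.erase i,
            ((algebraMap (MvPolynomial (Fin r) ℚ) _ (MvPolynomial.X i)) +
                algebraMap (MvPolynomial (Fin r) ℚ) _ (MvPolynomial.X j)) /
              ((algebraMap (MvPolynomial (Fin r) ℚ) _ (MvPolynomial.X i)) -
                algebraMap (MvPolynomial (Fin r) ℚ) _ (MvPolynomial.X j))) *
          (algebraMap (MvPolynomial (Fin r) ℚ) _ (MvPolynomial.X i)) ^ a) =
      schurQ (fun i => algebraMap (MvPolynomial (Fin r) ℚ)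
          (FractionRing (MvPolynomial (Fin r) ℚ)) (MvPolynomial.X i)) (a + 1) -
        (1 / 2) * (-1) ^ r *
          schurQ (fun i => algebraMap (MvPolynomial (Fin r) ℚ)
            (FractionRing (MvPolynomial (Fin r) ℚ)) (MvPolynomial.X i)) a +
        (1 / 2) * (if a = 0 then 1 else 0) := by
  have hinj : Function.Injective (algebraMap (MvPolynomial (Fin r) ℚ)
      (FractionRing (MvPolynomial (Fin r) ℚ))) := IsFractionRing.injective _ _
  exact sum_gamma_mul_pow_eq_schurQ _
    (fun i => (map_ne_zero_iff _ hinj).mpr (MvPolynomial.X_ne_zero i))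
    (hinj.comp MvPolynomial.X_injective) two_ne_zero

/-- with u₁,…,u_r algebraically independent indeterminates (over a ring with 2
invertible, realized in the fraction field of MvPolynomial (Fin r) ℚ), setting
γᵢ = (2uᵢ - (-1)^r)·∏_{j≠i}(uᵢ+u_j)/(uᵢ-u_j) and η_a = ∑ᵢ γᵢ uᵢᵃ, one has
η_a = q_{a+1}(u) - (1/2)(-1)^r q_a(u) + (1/2)δ_{a,0} for all a ≥ 0. -/
theorem eta_eq_schurQ_formula (r : ℕ) (hr : 0 < r) :
    ∀ a : ℕ,
      (∑ i : Fin r,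
        ((2 * (algebraMap (MvPolynomial (Fin r) ℚ) (FractionRing (MvPolynomial (Fin r) ℚ))
              (MvPolynomial.X i)) - (-1) ^ r) *
          ∏ j ∈ Finset.univ.erase i,
            ((algebraMap (MvPolynomial (Fin r) ℚ) _ (MvPolynomial.X i)) +
                algebraMap (MvPolynomial (Fin r) ℚ) _ (MvPolynomial.X j)) /
              ((algebraMap (MvPolynomial (Fin r) ℚ) _ (MvPolynomial.X i)) -
                algebraMap (MvPolynomial (Fin r) ℚ) _ (MvPolynomial.X j))) *
          (algebraMap (MvPolynomial (Fin r) ℚ) _ (MvPolynomial.X i)) ^ a) =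
      schurQ (fun i => algebraMap (MvPolynomial (Fin r) ℚ)
          (FractionRing (MvPolynomial (Fin r) ℚ)) (MvPolynomial.X i)) (a + 1) -
        (1 / 2) * (-1) ^ r *
          schurQ (fun i => algebraMap (MvPolynomial (Fin r) ℚ)
            (FractionRing (MvPolynomial (Fin r) ℚ)) (MvPolynomial.X i)) a +
        (1 / 2) * (if a = 0 then 1 else 0) :=
  eta_eq_schurQ_formula_general r
end

section
/- Let R be a commutative ring, and suppose (ω_a)_{a≥0} is a sequence in R satisfying the recursion 2ω_a = ∑_{b=1}^a (-1)^{b-1} ω_{b-1} ω_{a-b} - ω_{a-1} for all odd a ≥ 1 (weak admissibility). If moreover ω_a = ∑_{i=1}^r γ_i u_i^a for some γ_i, u_i ∈ R, then substituting ω_a = η_a(u) with η_a(u) = q_{a+1}(u) + (1/2)(-1)^{r-1} q_a(u) + (1/2)δ_{a,0} (when 2 is invertible) also satisfies this recursion; i.e., the sequence (η_a(u))_{a≥0} satisfies 2η_a = ∑_{b=1}^a (-1)^{b-1} η_{b-1} η_{a-b} - η_{a-1} for all odd a ≥ 1. -/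
open Finset

/-!
Let `Q(t) = ∑ q_a t^a`, so that `Q(t) Q(-t) = 1`, and let `H(t) = ∑ η_a t^a`. By the definition of
`η`, `1 + t (H(t) - 1/2) = (1 + c t) Q(t)` with `c = (-1)^(r-1)/2`, so `F(t) = 1 + t (H(t) - 1/2)`
satisfies `F(t) F(-t) = 1 - c² t² = 1 - t²/4`. Expanding the left side and cancelling `t`, this says
`H(t) - H(-t) = t (H(-t) H(t) - (H(t) + H(-t))/2)`, and the coefficient of an odd power `t^a` of this
identity is the weak admissibility recursion for `η_a`.
-/

open PowerSeries

def WeaklyAdmissible {R : Type*} [CommRing R] (ω : ℕ → R) : Prop :=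
  ∀ a : ℕ, Odd a →
    2 * ω a = (∑ b ∈ Icc 1 a, (-1) ^ (b - 1) * ω (b - 1) * ω (a - b)) - ω (a - 1)

section GeneratingFunction

variable {R : Type*} [CommRing R]

theorem rescale_C (a c : R) : rescale a (C c) = C c := by
  ext (_ | n) <;> simp [coeff_rescale, coeff_C]

theorem mk_pow_mul_one_sub_C_mul_X_eq_one (v : R) :
    PowerSeries.mk (fun k => v ^ k) * (1 - C v * X) = 1 := by
  have hmk : PowerSeries.mk (fun k => v ^ k) = rescale v (PowerSeries.mk 1) := by
    simp [rescale_mk]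
  rw [hmk, show 1 - C v * X = rescale v (1 - X) by simp [rescale_X], ← map_mul,
    mk_one_mul_one_sub_eq_one, map_one]

theorem coeff_rescale_neg_one_mul_self (ω : ℕ → R) (m : ℕ) :
    coeff m (rescale (-1) (PowerSeries.mk ω) * PowerSeries.mk ω) =
      ∑ b ∈ Icc 1 (m + 1), (-1) ^ (b - 1) * ω (b - 1) * ω (m + 1 - b) := by
  rw [coeff_mul, Finset.Nat.sum_antidiagonal_eq_sum_range_succ_mk, ← Ico_add_one_right_eq_Icc,
    sum_Ico_eq_sum_range, Nat.add_sub_cancel]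
  refine sum_congr rfl fun j _ => ?_
  simp [coeff_rescale, add_comm 1 j]

theorem sub_rescale_eq_of_mul_rescale_eq [Invertible (2 : R)] (H : R⟦X⟧)
    (h : (1 + X * (H - C ⅟2)) * rescale (-1) (1 + X * (H - C ⅟2)) = 1 - C (⅟2 * ⅟2) * X ^ 2) :
    H - rescale (-1) H = X * (rescale (-1) H * H - C ⅟2 * (H + rescale (-1) H)) := by
  apply X_mul_cancel
  simp only [map_add, map_one, map_mul, map_sub, rescale_neg_one_X, rescale_C] at h
  linear_combination h

theorem weaklyAdmissible_of_sub_rescale_eq [Invertible (2 : R)] (ω : ℕ → R)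
    (h : PowerSeries.mk ω - rescale (-1) (PowerSeries.mk ω) =
      X * (rescale (-1) (PowerSeries.mk ω) * PowerSeries.mk ω -
        C ⅟2 * (PowerSeries.mk ω + rescale (-1) (PowerSeries.mk ω)))) :
    WeaklyAdmissible ω := by
  rintro _ ⟨k, rfl⟩
  have hk := congrArg (coeff (2 * k + 1)) h
  simp only [coeff_succ_X_mul, map_sub, coeff_rescale_neg_one_mul_self, map_add, coeff_mk,
    coeff_rescale, coeff_C_mul, pow_succ, pow_mul] at hk
  norm_num at hk
  rw [add_tsub_cancel_right]
  linear_combination hk - ω (2 * k) * invOf_mul_self (2 : R)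

end GeneratingFunction

section SchurQ

variable {R : Type*} [CommRing R] {r : ℕ}

theorem rescale_neg_one_schurQSeries_mul_self (u : Fin r → R) :
    rescale (-1) (schurQSeries u) * schurQSeries u = 1 := by
  rw [schurQSeries, map_prod, ← prod_mul_distrib]
  refine prod_eq_one fun i _ => ?_
  have hneg : rescale (-1) ((1 + C (u i) * X) * PowerSeries.mk fun k => u i ^ k) =
      (1 - C (u i) * X) * PowerSeries.mk fun k => (-u i) ^ k := by
    rw [map_mul, map_add, map_one, map_mul, rescale_C, rescale_neg_one_X, rescale_mk]
    congr 1
    · ring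
    · ext n
      rw [coeff_mk, coeff_mk, ← mul_pow, neg_one_mul]
  have hgeom := mk_pow_mul_one_sub_C_mul_X_eq_one (u i)
  have hgeom_neg := mk_pow_mul_one_sub_C_mul_X_eq_one (-u i)
  rw [map_neg] at hgeom_neg
  rw [hneg]
  linear_combination (PowerSeries.mk fun k => (-u i) ^ k) * (1 + C (u i) * X) * hgeom + hgeom_neg

theorem constantCoeff_schurQSeries (u : Fin r → R) : constantCoeff (schurQSeries u) = 1 := by
  simp [schurQSeries, map_prod]

theorem one_add_X_mul_mk_etaSeq [Invertible (2 : R)] (u : Fin r → R) :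
    1 + X * (PowerSeries.mk (etaSeq u) - C ⅟2) =
      (1 + C (⅟2 * (-1) ^ (r - 1)) * X) * schurQSeries u := by
  ext (_ | n)
  · simp [constantCoeff_schurQSeries]
  · simp only [add_mul, one_mul, mul_assoc, map_add, map_sub, coeff_succ_X_mul, coeff_mk,
      coeff_C_mul, coeff_C, coeff_one, etaSeq, schurQ]
    rw [if_neg n.succ_ne_zero, mul_ite, mul_one, mul_zero]
    ring

end SchurQ

theorem eta_weakly_admissible_general {R : Type*} [CommRing R] [Invertible (2 : R)] {r : ℕ}
    (u : Fin r → R) :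
    ∀ a : ℕ, Odd a →
      2 * etaSeq u a =
        (∑ b ∈ Finset.Icc 1 a, (-1) ^ (b - 1) * etaSeq u (b - 1) * etaSeq u (a - b)) -
          etaSeq u (a - 1) := by
  refine weaklyAdmissible_of_sub_rescale_eq _ (sub_rescale_eq_of_mul_rescale_eq _ ?_)
  have hsign : C ((-1 : R) ^ (r - 1)) ^ 2 = 1 := by
    rw [← map_pow, ← pow_mul, mul_comm, pow_mul, neg_one_sq, one_pow, map_one]
  rw [one_add_X_mul_mk_etaSeq, map_mul (rescale (-1 : R)), mul_mul_mul_comm,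
    mul_comm (schurQSeries u), rescale_neg_one_schurQSeries_mul_self]
  simp only [map_add, map_one, map_mul, rescale_neg_one_X, rescale_C]
  linear_combination (-C ⅟2 ^ 2 * X ^ 2) * hsign

/-- the sequence (η_a(u)) satisfies the weak admissibility recursion
2η_a = ∑_{b=1}^a (-1)^{b-1} η_{b-1} η_{a-b} - η_{a-1} for all odd a ≥ 1. -/
theorem eta_weakly_admissible {R : Type*} [CommRing R] [Invertible (2 : R)] {r : ℕ}
    (hr : 0 < r) (u : Fin r → R) :
    ∀ a : ℕ, Odd a →
      2 * etaSeq u a =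
        (∑ b ∈ Finset.Icc 1 a, (-1) ^ (b - 1) * etaSeq u (b - 1) * etaSeq u (a - b)) -
          etaSeq u (a - 1) :=
  eta_weakly_admissible_general u
end
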